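/- arXiv:0804.1935 — 7 statements merged into one kernel-verified Lean document; each statement's English description precedes it below -/
import Mathlib

section
/- For any permutation σ of [n] and the cyclic permutation ω = (2 3 ... n 1) (i.e., the map sending i to i+1 mod n), the 3-descent set of σ equals the 3-descent set of σ composed with ω (relabeling each value v < n to v+1 and n to 1). That is, D₃(σ) = D₃(σω). -/
open Finset
open scoped Classical

/-- entry of a permutation of `Fin n` at 0-indexed position `i` (0-based values). -/
def ent {n : ℕ} (σ : Equiv.Perm (Fin n)) (i : ℕ) : ℕ :=
  if h : i < n then (σ ⟨i, h⟩ : ℕ) else 0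

/-- the triple `(a, b, c)` of distinct values, reduced to a permutation in `S₃`, is odd. -/
def odd3 (a b c : ℕ) : Prop :=
  ((if b < a then 1 else 0) + (if c < a then 1 else 0) + (if c < b then 1 else 0)) % 2 = 1

instance (a b c : ℕ) : Decidable (odd3 a b c) := by
  unfold odd3; infer_instance

/-- 3-descent set, 0-indexed positions (position `i` here is paper position `i+1`). -/
def D3 {n : ℕ} (σ : Equiv.Perm (Fin n)) : Finset ℕ :=
  (Finset.range (n - 2)).filter (fun i => odd3 (ent σ i) (ent σ (i + 1)) (ent σ (i + 2)))

/-- alternating descent set, 0-indexed positions. -/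
def altD {n : ℕ} (σ : Equiv.Perm (Fin n)) : Finset ℕ :=
  (Finset.range (n - 1)).filter (fun i =>
    (Even i ∧ ent σ (i + 1) < ent σ i) ∨ (¬ Even i ∧ ent σ i < ent σ (i + 1)))

/-- number of up-down alternating permutations of `[n]` (the Euler number `Eₙ`). -/
noncomputable def EulerNum (n : ℕ) : ℕ :=
  ((Finset.univ : Finset (Equiv.Perm (Fin n))).filter (fun τ =>
    ∀ i ∈ Finset.range (n - 1),
      (Even i ∧ ent τ i < ent τ (i + 1)) ∨ (¬ Even i ∧ ent τ (i + 1) < ent τ i))).card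

/-- `c³ᵢ(σ)`, 0-indexed: number of `j > i+1` with `σᵢ σᵢ₊₁ σⱼ` odd. -/
def c3 {n : ℕ} (σ : Equiv.Perm (Fin n)) (i : ℕ) : ℕ :=
  ((Finset.range n).filter (fun j => i + 1 < j ∧ odd3 (ent σ i) (ent σ (i + 1)) (ent σ j))).card

/-- `ĉᵢ(σ)`, 0-indexed. -/
def chat {n : ℕ} (σ : Equiv.Perm (Fin n)) (i : ℕ) : ℕ :=
  ((Finset.range n).filter (fun j => i < j ∧
    ((Even i ∧ ent σ j < ent σ i) ∨ (¬ Even i ∧ ent σ i < ent σ j)))).card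

/-- `i₃` of an arbitrary word `f 0, f 1, ..., f (m-1)`. -/
def i3f (m : ℕ) (f : ℕ → ℕ) : ℕ :=
  ((Finset.range m ×ˢ Finset.range m).filter (fun p =>
    p.1 + 1 < p.2 ∧ odd3 (f p.1) (f (p.1 + 1)) (f p.2))).card

/-- the 3-inversion statistic `i₃`. -/
def i3 {n : ℕ} (σ : Equiv.Perm (Fin n)) : ℕ := i3f n (ent σ)

/-- the word `1*σ` (0-based values): `0, σ₀+1, σ₁+1, ...`. -/
def oneStar {n : ℕ} (σ : Equiv.Perm (Fin n)) : ℕ → ℕ :=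
  fun i => if i = 0 then 0 else ent σ (i - 1) + 1

/-- number of alternating inversions `î(σ)`. -/
def altInv {n : ℕ} (σ : Equiv.Perm (Fin n)) : ℕ :=
  ((Finset.range n ×ˢ Finset.range n).filter (fun p => p.1 < p.2 ∧
    ((Even p.1 ∧ ent σ p.2 < ent σ p.1) ∨ (¬ Even p.1 ∧ ent σ p.1 < ent σ p.2)))).card

/-- number of inversions of the word `f 0, ..., f (m-1)`. -/
def invf (m : ℕ) (f : ℕ → ℕ) : ℕ :=
  ((Finset.range m ×ˢ Finset.range m).filter (fun p => p.1 < p.2 ∧ f p.2 < f p.1)).card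

/-- major index of the word `f 0, ..., f (m-1)` (descent at 0-indexed `i` contributes `i+1`). -/
def majf (m : ℕ) (f : ℕ → ℕ) : ℕ :=
  ∑ i ∈ (Finset.range (m - 1)).filter (fun i => f (i + 1) < f i), (i + 1)

/-- `Â(m, r)`: number of permutations of `[m]` with `r - 1` alternating descents. -/
def Ahat (m r : ℕ) : ℕ :=
  ((Finset.univ : Finset (Equiv.Perm (Fin m))).filter (fun σ => (altD σ).card + 1 = r)).card

/-- down-up alternating: `σ₁ > σ₂ < σ₃ > ⋯`. -/
def DownUp {n : ℕ} (σ : Equiv.Perm (Fin n)) : Prop :=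
  ∀ i ∈ Finset.range (n - 1),
    (Even i ∧ ent σ (i + 1) < ent σ i) ∨ (¬ Even i ∧ ent σ i < ent σ (i + 1))

instance {n : ℕ} (σ : Equiv.Perm (Fin n)) : Decidable (DownUp σ) := by
  unfold DownUp; infer_instance

/-- up-down alternating: `σ₁ < σ₂ > σ₃ < ⋯`. -/
def UpDown {n : ℕ} (σ : Equiv.Perm (Fin n)) : Prop :=
  ∀ i ∈ Finset.range (n - 1),
    (Even i ∧ ent σ i < ent σ (i + 1)) ∨ (¬ Even i ∧ ent σ (i + 1) < ent σ i)

lemma odd3_rot (n A B C : ℕ) (hA : A < n) (hB : B < n) (hC : C < n)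
    (hAB : A ≠ B) (hAC : A ≠ C) (hBC : B ≠ C) :
    odd3 ((A + 1) % n) ((B + 1) % n) ((C + 1) % n) ↔ odd3 A B C := by
  have hA' : (A + 1) % n = if A + 1 = n then 0 else A + 1 := by
    split_ifs with h
    · simp [h]
    · exact Nat.mod_eq_of_lt (by omega)
  have hB' : (B + 1) % n = if B + 1 = n then 0 else B + 1 := by
    split_ifs with h
    · simp [h]
    · exact Nat.mod_eq_of_lt (by omega)
  have hC' : (C + 1) % n = if C + 1 = n then 0 else C + 1 := by
    split_ifs with h
    · simp [h]
    · exact Nat.mod_eq_of_lt (by omega)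
  rw [hA', hB', hC']
  split_ifs <;> (unfold odd3; split_ifs <;> first | rfl | omega)

lemma ent_rot (n : ℕ) (σ : Equiv.Perm (Fin n)) (i : ℕ) (h : i < n) :
    ent (finRotate n * σ) i = (ent σ i + 1) % n := by
  cases n with
  | zero => omega
  | succ m =>
    have hv : ((σ ⟨i, h⟩ : Fin (m + 1)) : ℕ) < m + 1 := (σ ⟨i, h⟩).isLt
    simp only [ent, dif_pos h, Equiv.Perm.mul_apply, finRotate_succ_apply]
    rw [Fin.val_add_one]
    split_ifs with hl
    · rw [hl, Fin.val_last]
      simp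
    · have hne : ((σ ⟨i, h⟩ : Fin (m + 1)) : ℕ) ≠ m := by
        intro hh
        exact hl (Fin.ext (by simp [hh, Fin.val_last]))
      rw [Nat.mod_eq_of_lt (by omega)]

/-- Relabeling values by the cycle `v ↦ v + 1 (mod n)` preserves the 3-descent set. -/
theorem stmt0 (n : ℕ) (σ : Equiv.Perm (Fin n)) :
    D3 (finRotate n * σ) = D3 σ := by
  ext i
  simp only [D3, Finset.mem_filter, Finset.mem_range, and_congr_right_iff]
  intro hi
  have h0 : i < n := by omega
  have h1 : i + 1 < n := by omega
  have h2 : i + 2 < n := by omega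
  rw [ent_rot n σ i h0, ent_rot n σ (i + 1) h1, ent_rot n σ (i + 2) h2]
  have eA : ent σ i = (σ ⟨i, h0⟩ : ℕ) := by simp [ent, h0]
  have eB : ent σ (i + 1) = (σ ⟨i + 1, h1⟩ : ℕ) := by simp [ent, h1]
  have eC : ent σ (i + 2) = (σ ⟨i + 2, h2⟩ : ℕ) := by simp [ent, h2]
  apply odd3_rot
  · rw [eA]; exact (σ ⟨i, h0⟩).isLt
  · rw [eB]; exact (σ ⟨i + 1, h1⟩).isLt
  · rw [eC]; exact (σ ⟨i + 2, h2⟩).isLt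
  · rw [eA, eB]
    intro h
    have := σ.injective (Fin.val_injective h)
    simp [Fin.ext_iff] at this
  · rw [eA, eC]
    intro h
    have := σ.injective (Fin.val_injective h)
    simp [Fin.ext_iff] at this
  · rw [eB, eC]
    intro h
    have := σ.injective (Fin.val_injective h)
    simp [Fin.ext_iff] at this
end

section
/- For every subset B ⊆ [n−2] and any i, j, k, ℓ ∈ [n], the number of permutations σ ∈ Sₙ with D₃(σ) = B and σᵢ = j equals the number of permutations σ ∈ Sₙ with D₃(σ) = B and σₖ = ℓ. -/
open Finset
open scoped Classical

/-!
Rotating the values of a permutation, `σ ↦ (· + 1 mod n) ∘ σ`, preserves the parity of every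
pattern of three values: an entry `n - 1` becomes `0`, which reverses its comparisons with the
two other entries and so changes the inversion count by two. Hence rotation preserves `D₃` and
maps `{σ | D₃ σ = B, σ i = j}` bijectively onto `{σ | D₃ σ = B, σ i = j + 1}`, so these fibres
all have the same size `#{σ | D₃ σ = B} / n`, which depends neither on `i` nor on `j`.
-/

lemma ent_lt {n : ℕ} (σ : Equiv.Perm (Fin n)) {p : ℕ} (hp : p < n) : ent σ p < n := by
  rw [ent, dif_pos hp]
  exact (σ _).isLt

lemma odd3_add_one_mod_iff {n a b c : ℕ} (ha : a < n) (hb : b < n) (hc : c < n) :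
    odd3 ((a + 1) % n) ((b + 1) % n) ((c + 1) % n) ↔ odd3 a b c := by
  have hrot : ∀ x < n, (x + 1) % n = if x = n - 1 then 0 else x + 1 := by
    intro x hx
    split_ifs with h
    · rw [show x + 1 = n by omega, Nat.mod_self]
    · exact Nat.mod_eq_of_lt (by omega)
  rw [hrot a ha, hrot b hb, hrot c hc]
  unfold odd3
  split_ifs <;> first | rfl | omega

section Rotation

variable {m : ℕ}

lemma ent_addRight_one_mul (σ : Equiv.Perm (Fin (m + 1))) {p : ℕ} (hp : p < m + 1) :
    ent (Equiv.addRight 1 * σ) p = (ent σ p + 1) % (m + 1) := by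
  rw [ent, ent, dif_pos hp, dif_pos hp]
  change ((σ ⟨p, hp⟩ + 1 : Fin (m + 1)) : ℕ) = _
  rw [Fin.val_add, Fin.val_one', Nat.add_mod_mod]

lemma D3_addRight_one_mul (σ : Equiv.Perm (Fin (m + 1))) :
    D3 (Equiv.addRight 1 * σ) = D3 σ := by
  refine filter_congr fun p hp => ?_
  rw [mem_range] at hp
  have h0 : p < m + 1 := by omega
  have h1 : p + 1 < m + 1 := by omega
  have h2 : p + 2 < m + 1 := by omega
  rw [ent_addRight_one_mul σ h0, ent_addRight_one_mul σ h1, ent_addRight_one_mul σ h2]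
  exact odd3_add_one_mod_iff (ent_lt σ h0) (ent_lt σ h1) (ent_lt σ h2)

variable (P : Equiv.Perm (Fin (m + 1)) → Prop) [DecidablePred P]
  (hP : ∀ σ, P (Equiv.addRight 1 * σ) ↔ P σ)
include hP

lemma card_filter_apply_eq_add_one (i j : Fin (m + 1)) :
    #{σ | P σ ∧ σ i = j} = #{σ | P σ ∧ σ i = j + 1} := by
  refine card_equiv (Equiv.mulLeft (Equiv.addRight 1)) fun σ => ?_
  simp only [mem_filter, mem_univ, true_and, Equiv.coe_mulLeft, hP, Equiv.Perm.mul_apply,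
    Equiv.coe_addRight, add_left_inj]

lemma card_filter_apply_eq_zero (i j : Fin (m + 1)) :
    #{σ | P σ ∧ σ i = j} = #{σ | P σ ∧ σ i = 0} := by
  induction j using Fin.induction with
  | zero => rfl
  | succ j ih =>
    rw [← Fin.coeSucc_eq_succ, ← card_filter_apply_eq_add_one P hP, ih]

lemma card_filter_eq_mul_card_filter_apply (i : Fin (m + 1)) :
    #{σ | P σ} = (m + 1) * #{σ | P σ ∧ σ i = 0} := by
  rw [card_eq_sum_card_fiberwise (f := fun σ => σ i) (t := univ) fun _ _ => mem_univ _]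
  simp only [filter_filter, card_filter_apply_eq_zero P hP i, sum_const, card_univ,
    Fintype.card_fin, smul_eq_mul]

theorem card_filter_apply_eq_card_filter_apply (i j k l : Fin (m + 1)) :
    #{σ | P σ ∧ σ i = j} = #{σ | P σ ∧ σ k = l} := by
  have hfibre := (card_filter_eq_mul_card_filter_apply P hP i).symm.trans
    (card_filter_eq_mul_card_filter_apply P hP k)
  rw [card_filter_apply_eq_zero P hP i j, card_filter_apply_eq_zero P hP k l]
  exact Nat.eq_of_mul_eq_mul_left m.succ_pos hfibre

end Rotation

theorem stmt1_general (n : ℕ) (B : Finset ℕ)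
    (i j k l : Fin n) :
    ((Finset.univ : Finset (Equiv.Perm (Fin n))).filter
      (fun σ => D3 σ = B ∧ σ i = j)).card =
    ((Finset.univ : Finset (Equiv.Perm (Fin n))).filter
      (fun σ => D3 σ = B ∧ σ k = l)).card := by
  obtain ⟨m, rfl⟩ : ∃ m, n = m + 1 := Nat.exists_eq_succ_of_ne_zero (Fin.pos i).ne'
  exact card_filter_apply_eq_card_filter_apply (D3 · = B)
    (fun σ => by rw [D3_addRight_one_mul]) i j k l

theorem stmt1 (n : ℕ) (B : Finset ℕ) (hB : B ⊆ Finset.range (n - 2))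
    (i j k l : Fin n) :
    ((Finset.univ : Finset (Equiv.Perm (Fin n))).filter
      (fun σ => D3 σ = B ∧ σ i = j)).card =
    ((Finset.univ : Finset (Equiv.Perm (Fin n))).filter
      (fun σ => D3 σ = B ∧ σ k = l)).card :=
  stmt1_general n B i j k l
end

section
/- The number of permutations σ of [n+1] with σ₁ = 1 and no 3-descents (i.e., D₃(σ) = ∅) equals the Euler number Eₙ, the number of up-down alternating permutations of [n]. -/
open Finset
open scoped Classical

/-!
Both sides are counted through Lehmer-type codes `c ∈ ∏_{i<n} [0, n - i)` (positions 0-based).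
A permutation `σ` of `[n+1]` with `σ₀ = 0` is determined by `i ↦ c³ᵢ(σ)`: knowing `σ₀, …, σᵢ`,
the number `c³ᵢ` fixes `σᵢ₊₁` among the unused values, because `b ↦ #{v unused | σᵢ b v odd}` is
injective. Likewise a permutation `τ` of `[n]` is determined by `i ↦ ĉᵢ(τ)`, which is a rank among
the unused values. Both code spaces have `n!` elements, so both code maps are bijective.

Locally, `σᵢσᵢ₊₁σᵢ₊₂` is odd iff `c³ᵢ + c³ᵢ₊₁ ≥ n - 1 - i`: `σᵢ₊₂` is counted by `c³ᵢ` exactly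
when the triple is odd, and every later value is counted by at least one of the two counts if the
triple is odd, by at most one if it is even. In the same way `τ` has an alternating descent at `i`
iff `ĉᵢ + ĉᵢ₊₁ ≥ n - 1 - i`. Hence `D₃(σ) = ∅` and "`τ` is up-down" both translate into the same
condition `cᵢ + cᵢ₊₁ < n - 1 - i` on the code.
-/

theorem Set.InjOn.of_lt_imp_ne {α β : Type*} [LinearOrder α] {s : Set α} {f : α → β}
    (h : ∀ a ∈ s, ∀ b ∈ s, a < b → f a ≠ f b) : Set.InjOn f s := by
  intro a ha b hb hab
  by_contra hne
  rcases lt_or_gt_of_ne hne with hlt | hlt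
  exacts [h a ha b hb hlt hab, h b hb a ha hlt hab.symm]

theorem Nat.card_subtype_eq_of_injective {α γ : Type*} [Fintype α] [Fintype γ] {f : α → γ}
    (hf : Function.Injective f) (hcard : Fintype.card α = Fintype.card γ) {P : α → Prop}
    {R : γ → Prop} (h : ∀ a, P a ↔ R (f a)) : Nat.card {a // P a} = Nat.card {c // R c} :=
  Nat.card_congr <| (Equiv.ofBijective f
    ((Fintype.bijective_iff_injective_and_card f).2 ⟨hf, hcard⟩)).subtypeEquiv h

theorem Equiv.Perm.card_fixing_zero (n : ℕ) :
    Nat.card {σ : Equiv.Perm (Fin (n + 1)) // σ 0 = 0} = n.factorial := by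
  have e : {σ : Equiv.Perm (Fin (n + 1)) // σ 0 = 0} ≃ Equiv.Perm {a : Fin (n + 1) // a ≠ 0} :=
    (Equiv.subtypeEquivRight fun σ => by simp).trans
      (Equiv.Perm.subtypeEquivSubtypePerm (· ≠ (0 : Fin (n + 1)))).symm
  rw [Nat.card_congr e, Nat.card_perm]
  simp

namespace Finset

variable {α : Type*} {s : Finset α} {p q : α → Prop} [DecidablePred p] [DecidablePred q]

theorem card_filter_lt_card_filter (hpq : ∀ x ∈ s, p x → q x) {x : α} (hx : x ∈ s)
    (hqx : q x) (hpx : ¬ p x) : #(s.filter p) < #(s.filter q) :=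
  card_lt_card <| (ssubset_iff_of_subset (monotone_filter_right s hpq)).2
    ⟨x, mem_filter.2 ⟨hx, hqx⟩, fun h => hpx (mem_filter.1 h).2⟩

theorem card_le_card_filter_add_card_filter (h : ∀ x ∈ s, p x ∨ q x) :
    #s ≤ #(s.filter p) + #(s.filter q) := by
  calc #s = #({x ∈ s | p x} ∪ {x ∈ s | q x}) := by rw [← filter_or, filter_true_of_mem h]
    _ ≤ _ := card_union_le _ _

theorem card_filter_add_card_filter_le (h : ∀ x ∈ s, ¬ (p x ∧ q x)) :
    #(s.filter p) + #(s.filter q) ≤ #s := by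
  rw [← card_union_of_disjoint (disjoint_filter.2 fun x hx hp hq => h x hx ⟨hp, hq⟩)]
  exact card_le_card (union_subset (filter_subset _ _) (filter_subset _ _))

end Finset

theorem card_filter_range_gt_le (m k : ℕ) (p : ℕ → Prop) [DecidablePred p] :
    #{j ∈ range m | k < j ∧ p j} ≤ m - (k + 1) := by
  calc #{j ∈ range m | k < j ∧ p j} ≤ #(Ioo k m) :=
        card_le_card fun j hj => by simp only [mem_filter, mem_range, mem_Ioo] at hj ⊢; omega
    _ = m - (k + 1) := by simp; omega

theorem iff_le_card_filter_add_card_filter {m k : ℕ} (hk : k + 1 < m) {P : Prop}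
    {p q : ℕ → Prop} [DecidablePred p] [DecidablePred q] (hP : P ↔ p (k + 1))
    (hcover : P → ∀ j, k + 1 < j → p j ∨ q j) (hdisj : ¬ P → ∀ j, k + 1 < j → ¬ (p j ∧ q j)) :
    P ↔ m - (k + 1) ≤ #{j ∈ range m | k < j ∧ p j} + #{j ∈ range m | k + 1 < j ∧ q j} := by
  set J := {j ∈ range m | k + 1 < j}
  have hJ : #J = m - (k + 2) := by
    rw [show J = Ioo (k + 1) m by ext j; simp [J]; omega, Nat.card_Ioo]; omega
  have hsplit : #{j ∈ range m | k < j ∧ p j} = (if p (k + 1) then 1 else 0) + #(J.filter p) := by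
    have hins : {j ∈ range m | k < j} = insert (k + 1) J := by ext j; simp [J]; omega
    rw [← filter_filter, hins, filter_insert]
    split_ifs
    · rw [card_insert_of_notMem (by simp [J])]; omega
    · simp
  have hq : #{j ∈ range m | k + 1 < j ∧ q j} = #(J.filter q) := by
    rw [filter_filter]
  rw [hsplit, hq]
  by_cases hPt : P
  · have := card_le_card_filter_add_card_filter (s := J) fun j hj =>
      hcover hPt j (mem_filter.1 hj).2
    simp only [hP.1 hPt, if_true, hPt, true_iff]
    omega
  · have := card_filter_add_card_filter_le (s := J) fun j hj =>
      hdisj hPt j (mem_filter.1 hj).2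
    simp only [hP.not.1 hPt, if_false, hPt, false_iff]
    omega

theorem odd3_self_right (a b : ℕ) : ¬ odd3 a b b := by
  unfold odd3; split_ifs <;> simp_all

theorem odd3_iff {a b v : ℕ} (hv : v ≠ a) :
    odd3 a b v ↔ (a < b ∧ a < v ∧ v < b) ∨ (b < a ∧ (v < b ∨ a < v)) := by
  unfold odd3; split_ifs <;> simp_all <;> omega

theorem odd3_or_odd3_of_odd3 {a b c : ℕ} (h : odd3 a b c) (x : ℕ) :
    odd3 a b x ∨ odd3 b c x := by
  unfold odd3 at *; split_ifs at * <;> simp_all <;> omega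

theorem not_odd3_and_odd3_of_not_odd3 {a b c : ℕ} (h : ¬ odd3 a b c) (x : ℕ) :
    ¬ (odd3 a b x ∧ odd3 b c x) := by
  unfold odd3 at *; split_ifs at * <;> simp_all <;> omega

theorem injOn_card_filter_lt (T : Finset ℕ) : Set.InjOn (fun b => #{v ∈ T | v < b}) T :=
  Set.InjOn.of_lt_imp_ne fun b hb b' _ hbb' =>
    (card_filter_lt_card_filter (p := (· < b)) (q := (· < b'))
      (fun _ _ hv => hv.trans hbb') hb hbb' (lt_irrefl b)).ne

theorem injOn_card_filter_gt (T : Finset ℕ) : Set.InjOn (fun b => #{v ∈ T | b < v}) T :=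
  Set.InjOn.of_lt_imp_ne fun b _ b' hb' hbb' =>
    (card_filter_lt_card_filter (p := (b' < ·)) (q := (b < ·))
      (fun _ _ hv => hbb'.trans hv) hb' hbb' (lt_irrefl b')).ne'

theorem injOn_card_filter_odd3 {T : Finset ℕ} {a : ℕ} (ha : a ∉ T) :
    Set.InjOn (fun b => #{v ∈ T | odd3 a b v}) T := by
  have hne : ∀ v ∈ T, v ≠ a := fun v hv h => ha (h ▸ hv)
  have key : ∀ b, #{v ∈ T | odd3 a b v} =
      #{v ∈ T | (a < b ∧ a < v ∧ v < b) ∨ (b < a ∧ (v < b ∨ a < v))} := fun b =>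
    congrArg card (filter_congr fun v hv => odd3_iff (hne v hv))
  refine Set.InjOn.of_lt_imp_ne fun b hb b' hb' hbb' => ?_
  have hab := hne b hb
  have hab' := hne b' hb'
  simp only [key]
  -- values below `a` have larger counts than values above `a`
  by_cases hsplit : b < a ∧ a < b'
  · exact (card_filter_lt_card_filter (fun v _ => by omega) hb' (by omega) (by omega)).ne'
  · exact (card_filter_lt_card_filter (fun v _ => by omega) hb (by omega) (by omega)).ne

section Entries

variable {m : ℕ} (π : Equiv.Perm (Fin m))

theorem ent_of_lt {i : ℕ} (h : i < m) : ent π i = π ⟨i, h⟩ := dif_pos h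

theorem ent_lt_s3 {i : ℕ} (h : i < m) : ent π i < m := by
  rw [ent_of_lt π h]; exact (π _).2

theorem ent_eq_ent_iff {i j : ℕ} (hi : i < m) (hj : j < m) : ent π i = ent π j ↔ i = j := by
  simp [ent_of_lt π hi, ent_of_lt π hj, ← Fin.ext_iff]

theorem ent_injOn : Set.InjOn (ent π) (Set.Iio m) :=
  fun _ hi _ hj h => (ent_eq_ent_iff π hi hj).1 h

theorem ent_symm_apply {v : ℕ} (hv : v < m) : ent π (π.symm ⟨v, hv⟩) = v := by
  simp [ent_of_lt π (π.symm ⟨v, hv⟩).2]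

def unusedValues (k : ℕ) : Finset ℕ := range m \ (range k).image (ent π)

theorem mem_unusedValues {k v : ℕ} :
    v ∈ unusedValues π k ↔ ∃ j, k ≤ j ∧ j < m ∧ ent π j = v := by
  simp only [unusedValues, mem_sdiff, mem_range, mem_image, not_exists, not_and]
  constructor
  · rintro ⟨hv, hk⟩
    refine ⟨π.symm ⟨v, hv⟩, ?_, (π.symm _).2, ent_symm_apply π hv⟩
    by_contra! h
    exact hk _ h (ent_symm_apply π hv)
  · rintro ⟨j, hkj, hjm, rfl⟩
    exact ⟨ent_lt_s3 π hjm, fun i hi h => by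
      have := (ent_eq_ent_iff π (by omega) hjm).1 h; omega⟩

theorem ent_mem_unusedValues {k : ℕ} (hk : k < m) : ent π k ∈ unusedValues π k :=
  (mem_unusedValues π).2 ⟨k, le_rfl, hk, rfl⟩

theorem ent_notMem_unusedValues {j k : ℕ} (hj : j < k) : ent π j ∉ unusedValues π k := by
  simp only [unusedValues, mem_sdiff, mem_image, mem_range]
  exact fun h => h.2 ⟨j, hj, rfl⟩

theorem unusedValues_congr {π' : Equiv.Perm (Fin m)} {k : ℕ}
    (h : ∀ j < k, ent π j = ent π' j) : unusedValues π k = unusedValues π' k := by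
  rw [unusedValues, unusedValues, image_congr fun j hj => h j (mem_range.1 hj)]

theorem card_filter_gt_eq_card_filter_unusedValues (k : ℕ) (p : ℕ → Prop)
    [DecidablePred p] (hp : ¬ p (ent π k)) :
    #{j ∈ range m | k < j ∧ p (ent π j)} = #{v ∈ unusedValues π k | p v} := by
  refine card_nbij (ent π) (fun j hj => ?_) ((ent_injOn π).mono fun j hj => ?_) (fun v hv => ?_)
  · simp only [coe_filter, mem_range] at hj ⊢
    exact ⟨(mem_unusedValues π).2 ⟨j, hj.2.1.le, hj.1, rfl⟩, hj.2.2⟩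
  · simp only [coe_filter, mem_range] at hj
    exact hj.1
  · simp only [coe_filter] at hv
    obtain ⟨⟨j, hkj, hjm, rfl⟩, hpv⟩ := And.imp_left (mem_unusedValues π).1 hv
    have hkj' : k ≠ j := by rintro rfl; exact hp hpv
    refine ⟨j, ?_, rfl⟩
    simp only [coe_filter, mem_range]
    exact ⟨hjm, by omega, hpv⟩

end Entries

theorem eq_of_forall_ent_eq {m : ℕ} {π π' : Equiv.Perm (Fin m)}
    (h : ∀ k < m, (∀ j < k, ent π j = ent π' j) → ent π k = ent π' k) : π = π' := by
  have key : ∀ k < m, ent π k = ent π' k := fun k =>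
    Nat.strong_induction_on k fun k ih hk => h k hk fun j hj => ih j hj (hj.trans hk)
  ext x
  simpa [ent_of_lt _ x.2] using key x x.2

theorem ent_eq_of_card_filter_eq {m k : ℕ} {π π' : Equiv.Perm (Fin m)} (hk : k < m)
    (hpre : ∀ j < k, ent π j = ent π' j) (r : ℕ → ℕ → Prop) [DecidableRel r]
    (hr : ∀ b, ¬ r b b)
    (hinj : Set.InjOn (fun b => #{v ∈ unusedValues π k | r b v}) (unusedValues π k))
    (h : #{j ∈ range m | k < j ∧ r (ent π k) (ent π j)} =
      #{j ∈ range m | k < j ∧ r (ent π' k) (ent π' j)}) :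
    ent π k = ent π' k := by
  have hT := unusedValues_congr π hpre
  rw [card_filter_gt_eq_card_filter_unusedValues π k _ (hr _),
    card_filter_gt_eq_card_filter_unusedValues π' k _ (hr _), ← hT] at h
  exact hinj (ent_mem_unusedValues π hk) (hT ▸ ent_mem_unusedValues π' hk) h

theorem eq_of_ent_zero_eq_of_c3_eq {m : ℕ} {σ σ' : Equiv.Perm (Fin m)}
    (h0 : ent σ 0 = ent σ' 0) (h : ∀ i, i + 1 < m → c3 σ i = c3 σ' i) : σ = σ' := by
  refine eq_of_forall_ent_eq fun k hk hpre => ?_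
  rcases k with _ | i
  · exact h0
  · have hi : ent σ i = ent σ' i := hpre i (Nat.lt_succ_self i)
    refine ent_eq_of_card_filter_eq hk hpre (fun b v => odd3 (ent σ i) b v) (odd3_self_right _)
      (injOn_card_filter_odd3 (ent_notMem_unusedValues σ (Nat.lt_succ_self i))) ?_
    simpa only [c3, hi] using h i hk

theorem eq_of_chat_eq {m : ℕ} {τ τ' : Equiv.Perm (Fin m)}
    (h : ∀ i < m, chat τ i = chat τ' i) : τ = τ' := by
  refine eq_of_forall_ent_eq fun k hk hpre => ?_
  refine ent_eq_of_card_filter_eq hk hpre (fun b v => (Even k ∧ v < b) ∨ (¬ Even k ∧ b < v))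
    (fun b => by omega) ?_ (h k hk)
  by_cases hk : Even k
  · simpa [hk] using injOn_card_filter_lt (unusedValues τ k)
  · simpa [hk] using injOn_card_filter_gt (unusedValues τ k)

theorem c3_le {m : ℕ} (σ : Equiv.Perm (Fin m)) (i : ℕ) : c3 σ i ≤ m - (i + 2) :=
  card_filter_range_gt_le m (i + 1) _

theorem chat_le {m : ℕ} (τ : Equiv.Perm (Fin m)) (i : ℕ) : chat τ i ≤ m - (i + 1) :=
  card_filter_range_gt_le m i _

theorem odd3_iff_le_c3_add_c3 {m : ℕ} (σ : Equiv.Perm (Fin m)) {i : ℕ} (hi : i + 2 < m) :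
    odd3 (ent σ i) (ent σ (i + 1)) (ent σ (i + 2)) ↔ m - (i + 2) ≤ c3 σ i + c3 σ (i + 1) :=
  iff_le_card_filter_add_card_filter (k := i + 1) hi Iff.rfl
    (fun h _ _ => odd3_or_odd3_of_odd3 h _) (fun h _ _ => not_odd3_and_odd3_of_not_odd3 h _)

theorem altDescent_iff_le_chat_add_chat {m : ℕ} (τ : Equiv.Perm (Fin m)) {i : ℕ}
    (hi : i + 1 < m) :
    ((Even i ∧ ent τ (i + 1) < ent τ i) ∨ (¬ Even i ∧ ent τ i < ent τ (i + 1))) ↔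
      m - (i + 1) ≤ chat τ i + chat τ (i + 1) := by
  refine iff_le_card_filter_add_card_filter hi Iff.rfl (fun h j _ => ?_) (fun h j _ => ?_) <;>
    by_cases he : Even i <;> simp [he, Nat.even_add_one] at h ⊢ <;> omega

def IsAdmissibleCode {n : ℕ} (c : (i : Fin n) → Fin (n - i)) : Prop :=
  ∀ i (h : i + 1 < n), (c ⟨i, by omega⟩ : ℕ) + c ⟨i + 1, h⟩ < n - (i + 1)

def c3Code {n : ℕ} (σ : Equiv.Perm (Fin (n + 1))) (i : Fin n) : Fin (n - i) :=
  ⟨c3 σ i, by have := c3_le σ i; omega⟩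

def chatCode {n : ℕ} (τ : Equiv.Perm (Fin n)) (i : Fin n) : Fin (n - i) :=
  ⟨chat τ i, by have := chat_le τ i; omega⟩

theorem card_code (n : ℕ) : Fintype.card ((i : Fin n) → Fin (n - i)) = n.factorial := by
  rw [Fintype.card_pi]
  simp only [Fintype.card_fin]
  rw [Fin.prod_univ_eq_prod_range (fun i => n - i), ← Nat.descFactorial_eq_prod_range,
    Nat.descFactorial_self]

theorem c3Code_injective (n : ℕ) :
    Function.Injective fun σ : {σ : Equiv.Perm (Fin (n + 1)) // σ 0 = 0} => c3Code σ.1 := by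
  intro σ σ' h
  refine Subtype.ext (eq_of_ent_zero_eq_of_c3_eq ?_ fun i hi =>
    congrArg Fin.val (congrFun h ⟨i, by omega⟩))
  simp [ent_of_lt _ (Nat.succ_pos n), σ.2, σ'.2]

theorem chatCode_injective (n : ℕ) : Function.Injective (chatCode (n := n)) :=
  fun _ _ h => eq_of_chat_eq fun i hi => congrArg Fin.val (congrFun h ⟨i, hi⟩)

theorem D3_eq_empty_iff {n : ℕ} (σ : Equiv.Perm (Fin (n + 1))) :
    D3 σ = ∅ ↔ IsAdmissibleCode (c3Code σ) := by
  simp only [D3, filter_eq_empty_iff, mem_range, IsAdmissibleCode, c3Code]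
  constructor
  · intro h i hi
    have := (odd3_iff_le_c3_add_c3 σ (by omega : i + 2 < n + 1)).not.1 (h (by omega))
    omega
  · intro h i hi
    have := h i (by omega)
    rw [odd3_iff_le_c3_add_c3 σ (by omega)]
    omega

theorem upDown_iff {n : ℕ} (τ : Equiv.Perm (Fin n)) :
    UpDown τ ↔ IsAdmissibleCode (chatCode τ) := by
  simp only [UpDown, mem_range, IsAdmissibleCode, chatCode]
  refine ⟨fun h i hi => ?_, fun h i hi => ?_⟩
  · have hup := h i (by omega)
    refine not_le.1 ((altDescent_iff_le_chat_add_chat τ hi).not.1 ?_)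
    by_cases he : Even i <;> simp [he] at hup ⊢ <;> omega
  · have hdesc := (altDescent_iff_le_chat_add_chat τ (by omega)).not.2 (not_le.2 (h i (by omega)))
    have hne := (ent_eq_ent_iff τ (by omega : i < n) (by omega : i + 1 < n)).not.2 (by omega)
    by_cases he : Even i <;> simp [he] at hdesc ⊢ <;> omega

theorem stmt3 (n : ℕ) :
    ((Finset.univ : Finset (Equiv.Perm (Fin (n + 1)))).filter
      (fun σ => σ 0 = 0 ∧ D3 σ = (∅ : Finset ℕ))).card = EulerNum n := by
  calc #{σ : Equiv.Perm (Fin (n + 1)) | σ 0 = 0 ∧ D3 σ = ∅}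
      = Nat.card {σ : {σ : Equiv.Perm (Fin (n + 1)) // σ 0 = 0} // D3 σ.1 = ∅} := by
        rw [← Fintype.card_subtype, ← Nat.card_eq_fintype_card]
        exact Nat.card_congr (Equiv.subtypeSubtypeEquivSubtypeInter _ _).symm
    _ = Nat.card {c // IsAdmissibleCode c} :=
        Nat.card_subtype_eq_of_injective (c3Code_injective n)
          (by rw [← Nat.card_eq_fintype_card, Equiv.Perm.card_fixing_zero, card_code])
          fun σ => D3_eq_empty_iff σ.1
    _ = Nat.card {τ : Equiv.Perm (Fin n) // UpDown τ} :=
        (Nat.card_subtype_eq_of_injective (chatCode_injective n)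
          (by rw [Fintype.card_perm, Fintype.card_fin, card_code]) upDown_iff).symm
    _ = EulerNum n := by
        rw [EulerNum, ← Fintype.card_subtype, ← Nat.card_eq_fintype_card]
        rfl
end

section
/- The map code₃ restricted to permutations of [n] beginning with 1 is a bijection onto the set C_{n−2} of (n−2)-tuples (a₁,...,a_{n−2}) of non-negative integers with aᵢ ≤ n−1−i for all i. -/
open Finset
open scoped Classical

/-!
Read `σ` from left to right. Once `σᵢ` and the set `R` of values at the positions after `i` are
known, `cᵢ³(σ)` counts the `v ∈ R` lying strictly between `σᵢ` and `σᵢ₊₁` in the cyclic order of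
the values that starts just above `σᵢ`: it is the rank of `σᵢ₊₁ ∈ R` for that order, so it
determines `σᵢ₊₁`. By induction, `σ₁` and `code₃(σ)` determine `σ`, so `code₃` is injective on the
permutations beginning with `1`. There are `(n - 1)!` of them, and `|C_{n-2}| = (n - 1)!` as well.
-/

theorem Finset.injOn_card_filter_lt {α β : Type*} [LinearOrder β] {f : α → β} {s : Finset α}
    (hf : Set.InjOn f s) : Set.InjOn (fun b => #(s.filter fun v => f v < f b)) s := by
  have hlt : ∀ b ∈ s, ∀ b', f b < f b' →
      #(s.filter fun v => f v < f b) < #(s.filter fun v => f v < f b') := by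
    intro b hb b' hbb'
    refine card_lt_card ((ssubset_iff_of_subset fun v hv => ?_).mpr ⟨b, ?_, ?_⟩)
    · simp only [mem_filter] at hv ⊢
      exact ⟨hv.1, hv.2.trans hbb'⟩
    · exact mem_filter.mpr ⟨hb, hbb'⟩
    · simp
  intro b hb b' hb' h
  by_contra hne
  rcases lt_or_gt_of_ne (hf.ne hb hb' hne) with hbb' | hb'b
  · exact (hlt b hb b' hbb').ne h
  · exact (hlt b' hb' b hb'b).ne' h

section Code3

open Equiv
open scoped Nat

variable {n : ℕ}

lemma ent_of_lt_s5 (σ : Perm (Fin n)) {i : ℕ} (h : i < n) : ent σ i = σ ⟨i, h⟩ := dif_pos h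

lemma ent_lt_s5 (σ : Perm (Fin n)) {i : ℕ} (h : i < n) : ent σ i < n := by
  rw [ent_of_lt_s5 σ h]
  exact (σ _).isLt

lemma ent_injOn_s5 (σ : Perm (Fin n)) : Set.InjOn (ent σ) (range n) := by
  intro i hi j hj h
  rw [coe_range, Set.mem_Iio] at hi hj
  rw [ent_of_lt_s5 σ hi, ent_of_lt_s5 σ hj] at h
  simpa using σ.injective (Fin.val_injective h)

lemma image_ent_range (σ : Perm (Fin n)) : (range n).image (ent σ) = range n := by
  refine eq_of_subset_of_card_le (fun v hv => ?_) (card_image_of_injOn (ent_injOn_s5 σ)).ge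
  obtain ⟨i, hi, rfl⟩ := mem_image.mp hv
  exact mem_range.mpr (ent_lt_s5 σ (mem_range.mp hi))

/-- Orders `ℕ` cyclically starting from `a`: `a, a + 1, a + 2, …` come first, then
`0, 1, …, a - 1`. -/
def cycKey (a v : ℕ) : ℕ ×ₗ ℕ := toLex (if v < a then 1 else 0, v)

lemma cycKey_injective (a : ℕ) : Function.Injective (cycKey a) := by
  intro v w h
  simpa [cycKey] using congrArg (fun p => (ofLex p).2) h

lemma odd3_iff_cycKey_lt (a b v : ℕ) : odd3 a b v ↔ cycKey a v < cycKey a b := by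
  unfold odd3 cycKey
  rw [Prod.Lex.toLex_lt_toLex]
  split_ifs <;> grind

def suffixVals (σ : Perm (Fin n)) (m : ℕ) : Finset ℕ := (Ico m n).image (ent σ)

lemma suffixVals_eq_sdiff (σ : Perm (Fin n)) {m : ℕ} (hm : m ≤ n) :
    suffixVals σ m = range n \ (range m).image (ent σ) := by
  have hIco : Ico m n = range n \ range m := by
    ext j
    simp only [mem_Ico, mem_sdiff, mem_range]
    omega
  rw [suffixVals, hIco, image_sdiff_of_injOn (ent_injOn_s5 σ) (range_subset_range.mpr hm),
    image_ent_range]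

lemma suffixVals_congr {σ τ : Perm (Fin n)} {m : ℕ} (hm : m ≤ n)
    (h : ∀ j < m, ent σ j = ent τ j) : suffixVals σ m = suffixVals τ m := by
  rw [suffixVals_eq_sdiff σ hm, suffixVals_eq_sdiff τ hm,
    image_congr fun j hj => h j (mem_range.mp hj)]

lemma c3_eq_card_filter_cycKey_lt (σ : Perm (Fin n)) (k : ℕ) :
    c3 σ k = #((suffixVals σ (k + 1)).filter
      fun v => cycKey (ent σ k) v < cycKey (ent σ k) (ent σ (k + 1))) := by
  have hsub : Ico (k + 1) n ⊆ range n := fun j hj => mem_range.mpr (mem_Ico.mp hj).2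
  rw [suffixVals, filter_image,
    card_image_of_injOn ((ent_injOn_s5 σ).mono (coe_subset.mpr ((filter_subset _ _).trans hsub))), c3]
  congr 1
  ext j
  simp only [mem_filter, mem_range, mem_Ico, odd3_iff_cycKey_lt]
  constructor
  · rintro ⟨hj, hkj, hlt⟩
    exact ⟨⟨by omega, hj⟩, hlt⟩
  · rintro ⟨⟨hkj, hj⟩, hlt⟩
    have hj' : j ≠ k + 1 := by
      rintro rfl
      exact lt_irrefl _ hlt
    exact ⟨hj, by omega, hlt⟩

lemma c3_le_s5 (σ : Perm (Fin n)) (k : ℕ) : c3 σ k ≤ n - 2 - k :=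
  calc c3 σ k ≤ #(Ico (k + 2) n) := card_le_card fun j hj => by
        simp only [mem_filter, mem_range, mem_Ico] at hj ⊢
        omega
    _ = n - 2 - k := by
        rw [Nat.card_Ico]
        omega

lemma ent_succ_eq_of_c3_eq {σ τ : Perm (Fin n)} {k : ℕ} (hk : k + 1 < n)
    (hpre : ∀ j ≤ k, ent σ j = ent τ j) (hc : c3 σ k = c3 τ k) :
    ent σ (k + 1) = ent τ (k + 1) := by
  have hR : suffixVals σ (k + 1) = suffixVals τ (k + 1) :=
    suffixVals_congr hk.le fun j hj => hpre j (by omega)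
  have hmem (ρ : Perm (Fin n)) : ent ρ (k + 1) ∈ suffixVals ρ (k + 1) :=
    mem_image_of_mem _ (mem_Ico.mpr ⟨le_rfl, hk⟩)
  rw [c3_eq_card_filter_cycKey_lt σ k, c3_eq_card_filter_cycKey_lt τ k, ← hR,
    ← hpre k le_rfl] at hc
  exact Finset.injOn_card_filter_lt (cycKey_injective _).injOn (hmem σ) (hR ▸ hmem τ) hc

lemma eq_of_ent_zero_eq_of_c3_eq_s5 {σ τ : Perm (Fin n)} (h0 : ent σ 0 = ent τ 0)
    (hc : ∀ k, k + 2 < n → c3 σ k = c3 τ k) : σ = τ := by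
  have hent : ∀ j, ent σ j = ent τ j := by
    intro j
    induction j using Nat.strong_induction_on with
    | _ j ih =>
      rcases j with _ | k
      · exact h0
      by_cases hk : k + 1 < n
      · refine ent_succ_eq_of_c3_eq hk (fun i hi => ih i (by omega)) ?_
        by_cases hk2 : k + 2 < n
        · exact hc k hk2
        · have := c3_le_s5 σ k
          have := c3_le_s5 τ k
          omega
      · simp [ent, hk]
  ext i
  simpa [ent_of_lt_s5 _ i.isLt] using hent i

lemma card_filter_ent_zero_eq_zero (n : ℕ) :
    #(univ.filter fun σ : Perm (Fin n) => ent σ 0 = 0) = (n - 1)! := by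
  cases n with
  | zero => simp [ent]
  | succ m =>
    have hfst (σ : Perm (Fin (m + 1))) : (Perm.decomposeFin σ).1 = σ 0 := by
      simpa using (Perm.decomposeFin_symm_apply_zero (Perm.decomposeFin σ).1
        (Perm.decomposeFin σ).2).symm
    have hzero (σ : Perm (Fin (m + 1))) : ent σ 0 = 0 ↔ σ 0 = 0 := by
      rw [ent_of_lt_s5 σ m.succ_pos, Fin.ext_iff]
      rfl
    have hcard : m ! = #(univ : Finset (Perm (Fin m))) := by simp [Fintype.card_perm]
    rw [Nat.add_sub_cancel, hcard]
    refine card_nbij' (fun σ => (Perm.decomposeFin σ).2)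
      (fun τ => Perm.decomposeFin.symm (0, τ)) (fun _ _ => mem_coe.mpr (mem_univ _)) ?_ ?_ ?_
    · intro τ _
      simp [hzero, Perm.decomposeFin_symm_apply_zero]
    · intro σ hσ
      simp only [coe_filter, mem_univ, true_and, Set.mem_ofPred_eq, hzero] at hσ
      dsimp only
      rw [← hσ, ← hfst, Prod.mk.eta, Equiv.symm_apply_apply]
    · intro τ _
      simp

lemma card_piFinset_range_sub (n : ℕ) :
    #(Fintype.piFinset fun i : Fin (n - 2) => range (n - 1 - i)) = (n - 1)! := by
  rw [Fintype.card_piFinset, Fin.prod_univ_eq_prod_range (fun i => #(range (n - 1 - i)))]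
  simp only [card_range]
  rw [← Nat.descFactorial_eq_prod_range,
    ← Nat.factorial_mul_descFactorial (show n - 2 ≤ n - 1 by omega),
    Nat.factorial_eq_one.mpr (by omega), one_mul]

end Code3

theorem stmt5 (n : ℕ) :
    Set.BijOn (fun σ : Equiv.Perm (Fin n) => fun i : Fin (n - 2) => c3 σ (i : ℕ))
      {σ : Equiv.Perm (Fin n) | ent σ 0 = 0}
      {a : Fin (n - 2) → ℕ | ∀ i, a i ≤ n - 2 - (i : ℕ)} := by
  have hS : {σ : Equiv.Perm (Fin n) | ent σ 0 = 0}
      = ↑(univ.filter fun σ : Equiv.Perm (Fin n) => ent σ 0 = 0) := by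
    simp
  have hT : {a : Fin (n - 2) → ℕ | ∀ i, a i ≤ n - 2 - (i : ℕ)}
      = ↑(Fintype.piFinset fun i : Fin (n - 2) => range (n - 1 - i)) := by
    ext a
    simp only [Set.mem_ofPred_eq, Fintype.coe_piFinset, Set.mem_pi, Set.mem_univ, coe_range,
      Set.mem_Iio, true_implies]
    exact forall_congr' fun i => by omega
  have hmaps : Set.MapsTo (fun σ : Equiv.Perm (Fin n) => fun i : Fin (n - 2) => c3 σ (i : ℕ))
      {σ | ent σ 0 = 0} {a | ∀ i, a i ≤ n - 2 - (i : ℕ)} :=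
    fun σ _ i => c3_le_s5 σ i
  have hinj : Set.InjOn (fun σ : Equiv.Perm (Fin n) => fun i : Fin (n - 2) => c3 σ (i : ℕ))
      {σ | ent σ 0 = 0} := fun σ hσ τ hτ h =>
    eq_of_ent_zero_eq_of_c3_eq_s5 (hσ.trans hτ.symm) fun k hk => congrFun h ⟨k, by omega⟩
  refine ⟨hmaps, hinj, ?_⟩
  rw [hS, hT] at hmaps ⊢
  rw [hS] at hinj
  refine surjOn_of_injOn_of_card_le _ hmaps hinj ?_
  rw [card_filter_ent_zero_eq_zero, card_piFinset_range_sub]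
end

section
/- The statistic i₃(1*σ) is Mahonian on Sₙ: the generating polynomial ∑_{σ∈Sₙ} q^{i₃(1*σ)} equals the q-factorial [n]_q! = (1+q)(1+q+q²)⋯(1+q+⋯+q^{n−1}). -/
open Finset
open scoped Classical

namespace Stmt6

/-- normalized "odd pattern" predicate on distinct naturals -/
def P (a b c : ℕ) : Prop := (a < b ∧ a < c ∧ c < b) ∨ (b < a ∧ (c < b ∨ a < c))

instance (a b c : ℕ) : Decidable (P a b c) := by unfold P; infer_instance

lemma odd3_succ_iff {a b c : ℕ} (hab : a ≠ b) (hac : a ≠ c) (hbc : b ≠ c) :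
    odd3 (a + 1) (b + 1) (c + 1) ↔ P a b c := by
  simp only [odd3, P]
  split_ifs
  all_goals (constructor <;> intro h <;> first | exact h.elim | exact trivial | omega)

lemma odd3_zero_iff {b c : ℕ} : odd3 0 (b + 1) (c + 1) ↔ c < b := by
  simp only [odd3]
  split_ifs
  all_goals (constructor <;> intro h <;> first | exact h.elim | exact trivial | omega)

lemma not_P_self (a b : ℕ) : ¬ P a b b := by simp only [P]; omega

lemma filter_card_lt {R : Finset ℕ} {p q : ℕ → Prop} [DecidablePred p] [DecidablePred q]
    (himp : ∀ c, p c → q c) {x : ℕ} (hx : x ∈ R) (hqx : q x) (hnpx : ¬ p x) :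
    (R.filter p).card < (R.filter q).card := by
  apply Finset.card_lt_card
  constructor
  · intro c hc
    rw [mem_filter] at hc ⊢
    exact ⟨hc.1, himp c hc.2⟩
  · intro hsub
    have hmem : x ∈ R.filter p := hsub (mem_filter.mpr ⟨hx, hqx⟩)
    exact hnpx (mem_filter.mp hmem).2

lemma key_lt {a : ℕ} {R : Finset ℕ} (ha : a ∉ R) {b b' : ℕ} (hb : b ∈ R) (hb' : b' ∈ R)
    (hlt : b < b') :
    (R.filter (fun c => P a b c)).card ≠ (R.filter (fun c => P a b' c)).card := by
  have hab : a ≠ b := fun h => ha (h ▸ hb)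
  have hab' : a ≠ b' := fun h => ha (h ▸ hb')
  rcases lt_or_gt_of_ne hab with h1 | h1
  · -- a < b < b'
    refine Nat.ne_of_lt (filter_card_lt ?_ hb ?_ ?_)
    · intro c hc; simp only [P] at hc ⊢; omega
    · simp only [P]; omega
    · exact not_P_self a b
  · rcases lt_or_gt_of_ne hab' with h2 | h2
    · -- b < a < b'
      refine (Nat.ne_of_lt (filter_card_lt ?_ hb' ?_ ?_)).symm
      · intro c hc; simp only [P] at hc ⊢; omega
      · simp only [P]; omega
      · exact not_P_self a b'
    · -- b < b' < a
      refine Nat.ne_of_lt (filter_card_lt ?_ hb ?_ ?_)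
      · intro c hc; simp only [P] at hc ⊢; omega
      · simp only [P]; omega
      · exact not_P_self a b

lemma key {a : ℕ} {R : Finset ℕ} (ha : a ∉ R) {b b' : ℕ} (hb : b ∈ R) (hb' : b' ∈ R)
    (h : (R.filter (fun c => P a b c)).card = (R.filter (fun c => P a b' c)).card) : b = b' := by
  rcases lt_trichotomy b b' with hlt | he | hgt
  · exact absurd h (key_lt ha hb hb' hlt)
  · exact he
  · exact absurd h.symm (key_lt ha hb' hb hgt)

variable {n : ℕ}

noncomputable def T (σ : Equiv.Perm (Fin n)) (i : ℕ) : ℕ :=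
  ((Finset.range (n + 1)).filter (fun j =>
    i + 1 < j ∧ odd3 (oneStar σ i) (oneStar σ (i + 1)) (oneStar σ j))).card

lemma T_last (σ : Equiv.Perm (Fin n)) : T σ n = 0 := by
  unfold T
  rw [Finset.card_eq_zero, Finset.filter_eq_empty_iff]
  intro j hj
  rw [Finset.mem_range] at hj
  exact fun h => absurd h.1 (by omega)

lemma i3f_oneStar (σ : Equiv.Perm (Fin n)) :
    i3f (n + 1) (oneStar σ) = ∑ i ∈ Finset.range n, T σ i := by
  have h1 : i3f (n + 1) (oneStar σ) = ∑ i ∈ Finset.range (n + 1), T σ i := by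
    unfold i3f
    rw [Finset.card_eq_sum_card_fiberwise (f := Prod.fst) (t := Finset.range (n + 1))
        (fun p hp => (Finset.mem_product.mp (Finset.mem_filter.mp hp).1).1)]
    apply Finset.sum_congr rfl
    intro i hi
    unfold T
    apply Finset.card_bij (fun p _ => p.2)
    · intro p hp
      rw [Finset.mem_filter, Finset.mem_filter, Finset.mem_product] at hp
      obtain ⟨⟨⟨hp1, hp2⟩, hcond⟩, hfst⟩ := hp
      subst hfst
      rw [Finset.mem_filter]
      exact ⟨hp2, hcond⟩
    · intro p hp q hq hsnd
      rw [Finset.mem_filter] at hp hq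
      exact Prod.ext (hp.2.trans hq.2.symm) hsnd
    · intro j hj
      rw [Finset.mem_filter, Finset.mem_range] at hj
      refine ⟨(i, j), ?_, rfl⟩
      rw [Finset.mem_filter, Finset.mem_filter, Finset.mem_product]
      exact ⟨⟨⟨hi, Finset.mem_range.mpr hj.1⟩, hj.2⟩, rfl⟩
  rw [h1, Finset.sum_range_succ, T_last, add_zero]

lemma T_lt (σ : Equiv.Perm (Fin n)) {i : ℕ} (hi : i < n) : T σ i < n - i := by
  have hsub : ((Finset.range (n + 1)).filter (fun j =>
      i + 1 < j ∧ odd3 (oneStar σ i) (oneStar σ (i + 1)) (oneStar σ j))) ⊆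
      Finset.Ico (i + 2) (n + 1) := by
    intro j hj
    rw [Finset.mem_filter, Finset.mem_range] at hj
    obtain ⟨h1, h2, -⟩ := hj
    rw [Finset.mem_Ico]; omega
  have := Finset.card_le_card hsub
  rw [Nat.card_Ico] at this
  unfold T
  omega

lemma val_ne_of_pos_ne (σ : Equiv.Perm (Fin n)) {k l : Fin n} (h : (k : ℕ) ≠ (l : ℕ)) :
    (σ k : ℕ) ≠ (σ l : ℕ) := by
  intro hv
  exact h (congrArg Fin.val (σ.injective (Fin.val_injective hv)))

lemma T_zero (hn : 0 < n) (σ : Equiv.Perm (Fin n)) : T σ 0 = (σ ⟨0, hn⟩ : ℕ) := by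
  have e0 : oneStar σ 0 = 0 := by simp [oneStar]
  have e1 : oneStar σ 1 = (σ ⟨0, hn⟩ : ℕ) + 1 := by simp [oneStar, ent, hn]
  have step1 : T σ 0 = (Finset.univ.filter (fun k : Fin n => σ k < σ ⟨0, hn⟩)).card := by
    unfold T
    apply Finset.card_bij (fun j hj => (⟨j - 1, by
      rw [Finset.mem_filter, Finset.mem_range] at hj; omega⟩ : Fin n))
    · intro j hj
      have hj' := hj
      rw [Finset.mem_filter, Finset.mem_range] at hj'
      obtain ⟨hjn, hj1, hodd⟩ := hj'
      rw [Finset.mem_filter]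
      refine ⟨Finset.mem_univ _, ?_⟩
      have ej : oneStar σ j = (σ ⟨j - 1, by omega⟩ : ℕ) + 1 := by
        have hj0 : j ≠ 0 := by omega
        have hjl : j - 1 < n := by omega
        simp [oneStar, hj0, ent, hjl]
      rw [e0, e1, ej, odd3_zero_iff] at hodd
      rw [Fin.lt_def]
      exact hodd
    · intro j hj j' hj' hmk
      rw [Finset.mem_filter, Finset.mem_range] at hj hj'
      rw [Fin.mk.injEq] at hmk
      omega
    · intro k hk
      rw [Finset.mem_filter] at hk
      have hk0 : (k : ℕ) ≠ 0 := by
        intro h0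
        have hke : k = ⟨0, hn⟩ := Fin.ext h0
        rw [hke] at hk
        exact lt_irrefl _ hk.2
      refine ⟨(k : ℕ) + 1, ?_, ?_⟩
      · rw [Finset.mem_filter, Finset.mem_range]
        refine ⟨by omega, by omega, ?_⟩
        have ej : oneStar σ ((k : ℕ) + 1) = (σ k : ℕ) + 1 := by
          simp [oneStar, ent, k.isLt]
        rw [e0, e1, ej, odd3_zero_iff]
        exact Fin.lt_def.mp hk.2
      · exact Fin.ext (by simp)
  rw [step1]
  have step2 : (Finset.univ.filter (fun k : Fin n => σ k < σ ⟨0, hn⟩)).card =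
      (Finset.univ.filter (fun v : Fin n => v < σ ⟨0, hn⟩)).card := by
    apply Finset.card_bij (fun k _ => σ k)
    · intro k hk
      rw [Finset.mem_filter] at hk ⊢
      exact ⟨Finset.mem_univ _, hk.2⟩
    · intro k _ k' _ h
      exact σ.injective h
    · intro v hv
      rw [Finset.mem_filter] at hv
      refine ⟨σ.symm v, ?_, Equiv.apply_symm_apply σ v⟩
      rw [Finset.mem_filter]
      exact ⟨Finset.mem_univ _, by rw [Equiv.apply_symm_apply]; exact hv.2⟩
  rw [step2]
  have step3 : (Finset.univ.filter (fun v : Fin n => v < σ ⟨0, hn⟩)) = Finset.Iio (σ ⟨0, hn⟩) := by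
    ext v; simp [Finset.mem_Iio]
  rw [step3, Fin.card_Iio]

/-- values at positions `≥ i` -/
noncomputable def Rset (σ : Equiv.Perm (Fin n)) (i : ℕ) : Finset (Fin n) :=
  Finset.univ \ (Finset.univ.filter (fun k : Fin n => (k : ℕ) < i)).image σ

lemma Rset_congr {σ τ : Equiv.Perm (Fin n)} (i : ℕ)
    (h : ∀ k : Fin n, (k : ℕ) < i → σ k = τ k) : Rset σ i = Rset τ i := by
  unfold Rset
  congr 1
  apply Finset.image_congr
  intro k hk
  rw [Finset.mem_coe, Finset.mem_filter] at hk
  exact h k hk.2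

lemma mem_Rset_iff {σ : Equiv.Perm (Fin n)} {i : ℕ} {v : Fin n} :
    v ∈ Rset σ i ↔ i ≤ ((σ.symm v : Fin n) : ℕ) := by
  unfold Rset
  rw [Finset.mem_sdiff]
  constructor
  · rintro ⟨-, hnot⟩
    by_contra hlt
    push_neg at hlt
    exact hnot (Finset.mem_image.mpr
      ⟨σ.symm v, Finset.mem_filter.mpr ⟨Finset.mem_univ _, hlt⟩, by simp⟩)
  · intro hle
    refine ⟨Finset.mem_univ _, fun hmem => ?_⟩
    obtain ⟨k, hk, hkv⟩ := Finset.mem_image.mp hmem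
    rw [Finset.mem_filter] at hk
    rw [← hkv, Equiv.symm_apply_apply] at hle
    omega

lemma T_succ (σ : Equiv.Perm (Fin n)) {i : ℕ} (hi : i + 1 < n) :
    T σ (i + 1) = ((Rset σ (i + 1)).filter (fun v : Fin n =>
      P (σ ⟨i, by omega⟩ : ℕ) (σ ⟨i + 1, hi⟩ : ℕ) (v : ℕ))).card := by
  have hin : i < n := by omega
  have ea : oneStar σ (i + 1) = (σ ⟨i, hin⟩ : ℕ) + 1 := by
    simp [oneStar, ent, hin]
  have eb : oneStar σ (i + 2) = (σ ⟨i + 1, hi⟩ : ℕ) + 1 := by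
    have h2 : i + 2 - 1 = i + 1 := by omega
    simp [oneStar, ent, h2, hi]
  unfold T
  apply Finset.card_bij (fun j hj => σ ⟨j - 1, by
    rw [Finset.mem_filter, Finset.mem_range] at hj; omega⟩)
  · intro j hj
    have hj' := hj
    rw [Finset.mem_filter, Finset.mem_range] at hj'
    obtain ⟨hjn, hj1, hodd⟩ := hj'
    have hjl : j - 1 < n := by omega
    have ec : oneStar σ j = (σ ⟨j - 1, hjl⟩ : ℕ) + 1 := by
      have hj0 : j ≠ 0 := by omega
      simp [oneStar, hj0, ent, hjl]
    rw [ea, eb, ec] at hodd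
    rw [odd3_succ_iff (val_ne_of_pos_ne σ (show i ≠ i + 1 by omega))
      (val_ne_of_pos_ne σ (show i ≠ j - 1 by omega))
      (val_ne_of_pos_ne σ (show i + 1 ≠ j - 1 by omega))] at hodd
    rw [Finset.mem_filter]
    refine ⟨?_, hodd⟩
    rw [mem_Rset_iff, Equiv.symm_apply_apply]
    exact show i + 1 ≤ j - 1 by omega
  · intro j hj j' hj' h
    rw [Finset.mem_filter, Finset.mem_range] at hj hj'
    have h2 := σ.injective h
    rw [Fin.mk.injEq] at h2
    omega
  · intro v hv
    rw [Finset.mem_filter] at hv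
    obtain ⟨hvR, hvP⟩ := hv
    rw [mem_Rset_iff] at hvR
    have hkv : σ (σ.symm v) = v := Equiv.apply_symm_apply σ v
    have hki : i + 1 ≤ ((σ.symm v : Fin n) : ℕ) := hvR
    have hkne : ((σ.symm v : Fin n) : ℕ) ≠ i + 1 := by
      intro he
      have hke : (σ.symm v : Fin n) = ⟨i + 1, hi⟩ := Fin.ext he
      rw [hke] at hkv
      rw [← hkv] at hvP
      exact not_P_self _ _ hvP
    have hkgt : i + 2 ≤ ((σ.symm v : Fin n) : ℕ) := by omega
    refine ⟨((σ.symm v : Fin n) : ℕ) + 1, ?_, ?_⟩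
    · rw [Finset.mem_filter, Finset.mem_range]
      refine ⟨by omega, by omega, ?_⟩
      have ec : oneStar σ (((σ.symm v : Fin n) : ℕ) + 1) = (σ (σ.symm v) : ℕ) + 1 := by
        simp [oneStar, ent, (σ.symm v).isLt]
      rw [ea, eb, ec]
      rw [odd3_succ_iff (val_ne_of_pos_ne σ (show i ≠ i + 1 by omega))
        (val_ne_of_pos_ne σ (show (i : ℕ) ≠ ((σ.symm v : Fin n) : ℕ) by omega))
        (val_ne_of_pos_ne σ (show (i + 1 : ℕ) ≠ ((σ.symm v : Fin n) : ℕ) by omega))]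
      rw [hkv]
      exact hvP
    · simp only [Nat.add_sub_cancel, Fin.eta]
      exact hkv

lemma T_inj {σ τ : Equiv.Perm (Fin n)} (h : ∀ i, i < n → T σ i = T τ i) : σ = τ := by
  suffices H : ∀ m (hm : m < n), σ ⟨m, hm⟩ = τ ⟨m, hm⟩ by
    apply Equiv.ext
    intro x
    have := H x.val x.isLt
    simpa using this
  intro m
  induction m using Nat.strong_induction_on with
  | _ m IH =>
    intro hm
    match m, hm with
    | 0, hm =>
      apply Fin.val_injective
      have h0 := h 0 hm
      rw [T_zero hm σ, T_zero hm τ] at h0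
      exact h0
    | (i+1), hm =>
      have hin : i < n := by omega
      have ha : σ ⟨i, hin⟩ = τ ⟨i, hin⟩ := IH i (by omega) hin
      have hR : Rset σ (i + 1) = Rset τ (i + 1) := Rset_congr _ (fun k hk => by
        have := IH (k : ℕ) (by omega) k.isLt
        simpa using this)
      have hT := h (i + 1) hm
      rw [T_succ σ hm, T_succ τ hm] at hT
      rw [← hR] at hT
      rw [← ha] at hT
      have conv : ∀ (S : Finset (Fin n)) (a b : ℕ),
          (S.filter (fun v : Fin n => P a b (v : ℕ))).card =
          ((S.image Fin.val).filter (fun c => P a b c)).card := by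
        intro S a b
        rw [Finset.filter_image, Finset.card_image_of_injective _ Fin.val_injective]
      rw [conv, conv] at hT
      have hbσ : σ ⟨i + 1, hm⟩ ∈ Rset σ (i + 1) := by
        rw [mem_Rset_iff, Equiv.symm_apply_apply]
      have hbτ : τ ⟨i + 1, hm⟩ ∈ Rset σ (i + 1) := by
        rw [hR, mem_Rset_iff, Equiv.symm_apply_apply]
      have hbσ' : (σ ⟨i + 1, hm⟩ : ℕ) ∈ (Rset σ (i + 1)).image Fin.val :=
        Finset.mem_image_of_mem _ hbσ
      have hbτ' : (τ ⟨i + 1, hm⟩ : ℕ) ∈ (Rset σ (i + 1)).image Fin.val :=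
        Finset.mem_image_of_mem _ hbτ
      have hanotin : (σ ⟨i, hin⟩ : ℕ) ∉ (Rset σ (i + 1)).image Fin.val := by
        intro hmem
        rw [Finset.mem_image] at hmem
        obtain ⟨v, hvR, hval⟩ := hmem
        have hv : v = σ ⟨i, hin⟩ := Fin.val_injective hval
        rw [hv, mem_Rset_iff, Equiv.symm_apply_apply] at hvR
        exact (show ¬ (i + 1 ≤ i) by omega) hvR
      exact Fin.val_injective (key hanotin hbσ' hbτ' hT)

noncomputable def code (σ : Equiv.Perm (Fin n)) : ∀ i : Fin n, Fin (n - (i : ℕ)) :=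
  fun i => ⟨T σ i, T_lt σ i.isLt⟩

lemma code_bijective : Function.Bijective (code (n := n)) := by
  rw [Fintype.bijective_iff_injective_and_card]
  constructor
  · intro σ τ hcode
    apply T_inj
    intro i hi
    exact congrArg Fin.val (congrFun hcode ⟨i, hi⟩)
  · have hprod : ∏ j ∈ Finset.range n, (n - j) = Nat.factorial n := by
      calc ∏ j ∈ Finset.range n, (n - j)
          = ∏ j ∈ Finset.range n, ((fun m => m + 1) (n - 1 - j)) := by
            apply Finset.prod_congr rfl
            intro j hj
            rw [Finset.mem_range] at hj
            exact show n - j = n - 1 - j + 1 by omega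
        _ = ∏ j ∈ Finset.range n, (j + 1) := Finset.prod_range_reflect (fun m => m + 1) n
        _ = Nat.factorial n := Finset.prod_range_add_one_eq_factorial n
    rw [Fintype.card_perm, Fintype.card_pi, Fintype.card_fin]
    simp only [Fintype.card_fin]
    rw [Fin.prod_univ_eq_prod_range (fun i => n - i) n, hprod]

end Stmt6

theorem stmt6 (n : ℕ) :
    ∑ σ : Equiv.Perm (Fin n), (Polynomial.X : Polynomial ℚ) ^ (i3f (n + 1) (oneStar σ)) =
      ∏ i ∈ Finset.range n, ∑ j ∈ Finset.range (i + 1), (Polynomial.X : Polynomial ℚ) ^ j := by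
  classical
  have h1 : ∀ σ : Equiv.Perm (Fin n),
      (Polynomial.X : Polynomial ℚ) ^ (i3f (n + 1) (oneStar σ)) =
      ∏ i : Fin n, (Polynomial.X : Polynomial ℚ) ^ ((Stmt6.code σ i : ℕ)) := by
    intro σ
    rw [Stmt6.i3f_oneStar, ← Finset.prod_pow_eq_pow_sum,
      ← Fin.prod_univ_eq_prod_range (fun i => (Polynomial.X : Polynomial ℚ) ^ Stmt6.T σ i) n]
    rfl
  rw [Finset.sum_congr rfl (fun σ _ => h1 σ)]
  rw [Fintype.sum_bijective Stmt6.code Stmt6.code_bijective _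
    (fun c : ∀ i : Fin n, Fin (n - (i : ℕ)) => ∏ i, (Polynomial.X : Polynomial ℚ) ^ ((c i : ℕ)))
    (fun σ => rfl)]
  rw [← Fintype.piFinset_univ]
  have h3 := Finset.prod_univ_sum (fun i : Fin n => (Finset.univ : Finset (Fin (n - (i : ℕ)))))
    (fun i j => (Polynomial.X : Polynomial ℚ) ^ (j : ℕ))
  rw [← h3]
  have h2 : ∀ i : Fin n, ∑ j : Fin (n - (i : ℕ)), (Polynomial.X : Polynomial ℚ) ^ (j : ℕ) =
      ∑ j ∈ Finset.range (n - (i : ℕ)), (Polynomial.X : Polynomial ℚ) ^ j := by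
    intro i
    exact Fin.sum_univ_eq_sum_range (fun j => (Polynomial.X : Polynomial ℚ) ^ j) (n - (i : ℕ))
  rw [Finset.prod_congr rfl (fun i _ => h2 i)]
  rw [Fin.prod_univ_eq_prod_range
    (fun i => ∑ j ∈ Finset.range (n - i), (Polynomial.X : Polynomial ℚ) ^ j) n]
  calc ∏ i ∈ Finset.range n, ∑ j ∈ Finset.range (n - i), (Polynomial.X : Polynomial ℚ) ^ j
      = ∏ i ∈ Finset.range n,
          ((fun m => ∑ j ∈ Finset.range (m + 1), (Polynomial.X : Polynomial ℚ) ^ j) (n - 1 - i)) := by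
        apply Finset.prod_congr rfl
        intro i hi
        rw [Finset.mem_range] at hi
        have he : n - 1 - i + 1 = n - i := by omega
        simp only [he]
    _ = ∏ i ∈ Finset.range n, ∑ j ∈ Finset.range (i + 1), (Polynomial.X : Polynomial ℚ) ^ j :=
        Finset.prod_range_reflect
          (fun m => ∑ j ∈ Finset.range (m + 1), (Polynomial.X : Polynomial ℚ) ^ j) n
end

section
/- The alternating inversion statistic î is Mahonian: ∑_{σ∈Sₙ} q^{î(σ)} = (1+q)(1+q+q²)⋯(1+q+⋯+q^{n−1}). -/
open Finset
open scoped Classical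

/-!
Write `σ ∈ Sₙ₊₁` as its first value `p` followed by a word order-isomorphic to some `e ∈ Sₙ`.
The first entry forms an alternating inversion with exactly the `p` later entries smaller than it.
Deleting it shifts every position by one, which swaps the parity rule; complementing the values
of `e` swaps it back. Hence `î(σ) = p + î(rev ∘ e)`, and since `e ↦ rev ∘ e` is a bijection of
`Sₙ`, the generating function picks up the factor `1 + q + ⋯ + qⁿ`.
-/

namespace AltInv

open Equiv

variable {n : ℕ}

lemma ent_of_lt (σ : Perm (Fin n)) {i : ℕ} (h : i < n) : ent σ i = σ ⟨i, h⟩ := dif_pos h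

lemma ent_lt (σ : Perm (Fin n)) {i : ℕ} (h : i < n) : ent σ i < n := by
  rw [ent_of_lt σ h]; exact Fin.isLt _

lemma ent_symm_ent (σ : Perm (Fin n)) {i : ℕ} (h : i < n) : ent σ.symm (ent σ i) = i := by
  rw [ent_of_lt σ.symm (ent_lt σ h)]
  simp only [ent_of_lt σ h, Fin.eta, Equiv.symm_apply_apply]

lemma ent_ent_symm (σ : Perm (Fin n)) {v : ℕ} (h : v < n) : ent σ (ent σ.symm v) = v := by
  simpa using ent_symm_ent σ.symm h

lemma card_filter_ent_lt (σ : Perm (Fin n)) {m : ℕ} (hm : m ≤ n) :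
    #{j ∈ range n | ent σ j < m} = m := by
  conv_rhs => rw [← card_range m]
  refine card_nbij' (ent σ) (ent σ.symm) ?_ ?_ ?_ ?_
  · intro j hj
    simp_all
  · intro v hv
    simp only [coe_range, Set.mem_Iio, coe_filter, mem_range, Set.mem_ofPred_eq] at hv ⊢
    rw [ent_ent_symm σ (by omega)]
    exact ⟨ent_lt σ.symm (by omega), hv⟩
  · intro j hj
    simp only [coe_filter, mem_range, Set.mem_ofPred_eq] at hj
    exact ent_symm_ent σ hj.1
  · intro v hv
    simp only [coe_range, Set.mem_Iio] at hv
    exact ent_ent_symm σ (by omega)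

/-- The permutation with first value `p` whose remaining values are in the relative order of `e`. -/
def consPerm (p : Fin (n + 1)) (e : Perm (Fin n)) : Perm (Fin (n + 1)) :=
  ((finSuccEquiv n).trans (optionCongr e)).trans (finSuccEquiv' p).symm

@[simp]
lemma consPerm_zero (p : Fin (n + 1)) (e : Perm (Fin n)) : consPerm p e 0 = p := by
  simp [consPerm]

@[simp]
lemma consPerm_succ (p : Fin (n + 1)) (e : Perm (Fin n)) (k : Fin n) :
    consPerm p e k.succ = p.succAbove (e k) := by
  simp [consPerm]

lemma consPerm_bijective :
    Function.Bijective (fun pe : Fin (n + 1) × Perm (Fin n) => consPerm pe.1 pe.2) := by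
  rw [Fintype.bijective_iff_injective_and_card]
  refine ⟨?_, by simp [Fintype.card_perm, Nat.factorial_succ]⟩
  rintro ⟨p, e⟩ ⟨p', e'⟩ h
  obtain rfl : p = p' := by simpa using congr($h 0)
  obtain rfl : e = e' := Equiv.ext fun k => by simpa using congr($h k.succ)
  rfl

lemma ent_consPerm_zero (p : Fin (n + 1)) (e : Perm (Fin n)) : ent (consPerm p e) 0 = p := by
  simp [ent_of_lt _ n.succ_pos]

lemma ent_consPerm_succ (p : Fin (n + 1)) (e : Perm (Fin n)) {k : ℕ} (h : k < n) :
    ent (consPerm p e) (k + 1) = p.succAbove (e ⟨k, h⟩) := by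
  rw [ent_of_lt _ (by omega), ← consPerm_succ]
  rfl

def IsAltInv (σ : Perm (Fin n)) (i j : ℕ) : Prop :=
  (Even i ∧ ent σ j < ent σ i) ∨ (¬ Even i ∧ ent σ i < ent σ j)

lemma altInv_eq_card (σ : Perm (Fin n)) :
    altInv σ = #{q ∈ range n ×ˢ range n | q.1 < q.2 ∧ IsAltInv σ q.1 q.2} := by
  unfold altInv IsAltInv
  congr

lemma isAltInv_zero_iff (σ : Perm (Fin n)) (j : ℕ) : IsAltInv σ 0 j ↔ ent σ j < ent σ 0 := by
  simp [IsAltInv]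

lemma isAltInv_consPerm_succ_iff (p : Fin (n + 1)) (e : Perm (Fin n)) {k l : ℕ}
    (hk : k < n) (hl : l < n) :
    IsAltInv (consPerm p e) (k + 1) (l + 1) ↔ IsAltInv (Fin.revPerm * e) k l := by
  simp only [IsAltInv, ent_consPerm_succ p e hk, ent_consPerm_succ p e hl, ent_of_lt _ hk,
    ent_of_lt _ hl, Fin.val_fin_lt, Fin.succAbove_lt_succAbove_iff, Perm.mul_apply,
    Fin.revPerm_apply, Fin.rev_lt_rev, Nat.even_add_one]
  tauto

lemma card_isAltInv_fst_eq_zero (σ : Perm (Fin n)) :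
    #{q ∈ range n ×ˢ range n | (q.1 < q.2 ∧ IsAltInv σ q.1 q.2) ∧ q.1 = 0} = ent σ 0 := by
  rcases n.eq_zero_or_pos with rfl | hn
  · simp [ent]
  rw [← card_filter_ent_lt σ (ent_lt σ hn).le]
  refine card_nbij' Prod.snd (Prod.mk 0) ?_ ?_ ?_ ?_
  · rintro ⟨i, j⟩ hq
    simp only [coe_filter, mem_product, mem_range, Set.mem_ofPred_eq] at hq ⊢
    obtain ⟨⟨-, hj⟩, ⟨-, hinv⟩, rfl⟩ := hq
    exact ⟨hj, (isAltInv_zero_iff σ j).mp hinv⟩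
  · intro j hj
    simp only [coe_filter, mem_product, mem_range, Set.mem_ofPred_eq, isAltInv_zero_iff] at hj ⊢
    refine ⟨⟨hn, hj.1⟩, ⟨Nat.pos_of_ne_zero ?_, hj.2⟩, trivial⟩
    rintro rfl
    exact lt_irrefl _ hj.2
  · rintro ⟨i, j⟩ hq
    simp only [coe_filter, Set.mem_ofPred_eq] at hq
    simp [hq.2]
  · intro j _
    rfl

lemma card_isAltInv_consPerm_fst_ne_zero (p : Fin (n + 1)) (e : Perm (Fin n)) :
    #{q ∈ range (n + 1) ×ˢ range (n + 1) |
        (q.1 < q.2 ∧ IsAltInv (consPerm p e) q.1 q.2) ∧ ¬q.1 = 0} =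
      altInv (Fin.revPerm * e) := by
  rw [altInv_eq_card]
  refine card_nbij' (fun q => (q.1 - 1, q.2 - 1)) (fun q => (q.1 + 1, q.2 + 1)) ?_ ?_ ?_ ?_
  · rintro ⟨i, j⟩ hq
    simp only [coe_filter, mem_product, mem_range, Set.mem_ofPred_eq] at hq ⊢
    obtain ⟨⟨hi, hj⟩, ⟨hij, hinv⟩, hi0⟩ := hq
    obtain ⟨k, rfl⟩ : ∃ k, i = k + 1 := ⟨i - 1, by omega⟩
    obtain ⟨l, rfl⟩ : ∃ l, j = l + 1 := ⟨j - 1, by omega⟩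
    simp only [Nat.add_sub_cancel]
    exact ⟨⟨by omega, by omega⟩, by omega,
      (isAltInv_consPerm_succ_iff p e (by omega) (by omega)).mp hinv⟩
  · rintro ⟨k, l⟩ hq
    simp only [coe_filter, mem_product, mem_range, Set.mem_ofPred_eq] at hq ⊢
    obtain ⟨⟨hk, hl⟩, hkl, hinv⟩ := hq
    exact ⟨⟨by omega, by omega⟩, ⟨by omega, (isAltInv_consPerm_succ_iff p e hk hl).mpr hinv⟩,
      by omega⟩
  · rintro ⟨i, j⟩ hq
    simp only [coe_filter, mem_product, mem_range, Set.mem_ofPred_eq] at hq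
    simp only [Prod.mk.injEq]
    omega
  · rintro ⟨k, l⟩ _
    simp

lemma altInv_consPerm (p : Fin (n + 1)) (e : Perm (Fin n)) :
    altInv (consPerm p e) = p + altInv (Fin.revPerm * e) := by
  rw [altInv_eq_card, ← card_filter_add_card_filter_not (p := fun q => q.1 = 0), filter_filter,
    filter_filter, card_isAltInv_fst_eq_zero, ent_consPerm_zero,
    card_isAltInv_consPerm_fst_ne_zero]

lemma sum_pow_altInv_succ {R : Type*} [CommSemiring R] (x : R) (n : ℕ) :
    ∑ σ : Perm (Fin (n + 1)), x ^ altInv σ =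
      (∑ j ∈ range (n + 1), x ^ j) * ∑ σ : Perm (Fin n), x ^ altInv σ := by
  have hrev : ∑ e : Perm (Fin n), x ^ altInv (Fin.revPerm * e) = ∑ e, x ^ altInv e :=
    Fintype.sum_bijective _ (Group.mulLeft_bijective _) _ _ fun _ => rfl
  calc ∑ σ : Perm (Fin (n + 1)), x ^ altInv σ
      = ∑ pe : Fin (n + 1) × Perm (Fin n), x ^ altInv (consPerm pe.1 pe.2) :=
        (Fintype.sum_bijective _ consPerm_bijective _ _ fun _ => rfl).symm
    _ = ∑ p : Fin (n + 1), x ^ (p : ℕ) * ∑ e : Perm (Fin n), x ^ altInv (Fin.revPerm * e) := by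
        simp_rw [Fintype.sum_prod_type, altInv_consPerm, pow_add, mul_sum]
    _ = (∑ j ∈ range (n + 1), x ^ j) * ∑ σ : Perm (Fin n), x ^ altInv σ := by
        rw [hrev, ← sum_mul, Fin.sum_univ_eq_sum_range (x ^ ·)]

theorem sum_pow_altInv {R : Type*} [CommSemiring R] (x : R) (n : ℕ) :
    ∑ σ : Perm (Fin n), x ^ altInv σ = ∏ i ∈ range n, ∑ j ∈ range (i + 1), x ^ j := by
  induction n with
  | zero => simp [altInv]
  | succ n ih => rw [sum_pow_altInv_succ, ih, prod_range_succ, mul_comm]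

end AltInv

theorem stmt8 (n : ℕ) :
    ∑ σ : Equiv.Perm (Fin n), (Polynomial.X : Polynomial ℚ) ^ (altInv σ) =
      ∏ i ∈ Finset.range n, ∑ j ∈ Finset.range (i + 1), (Polynomial.X : Polynomial ℚ) ^ j :=
  AltInv.sum_pow_altInv Polynomial.X n
end

section
/- For any σ ∈ Sₙ, let σ^∨ = σ₁σ₃σ₅⋯σ₆σ₄σ₂ (odd-indexed entries in order, followed by even-indexed entries in reverse order). Then î(σ) = inv(σ^∨), the number of ordinary inversions of σ^∨. -/
open Finset
open scoped Classical

/-- the word `σ^∨ = σ₁σ₃σ₅⋯σ₆σ₄σ₂`. -/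
def vee {n : ℕ} (σ : Equiv.Perm (Fin n)) : ℕ → ℕ :=
  fun k => if 2 * k < n then ent σ (2 * k) else ent σ (2 * (n - k) - 1)

/-!
Reading `σ^∨` off `σ` is a permutation of positions: the `i`-th letter of `σ` (0-based) lands at
`i / 2` if `i` is even and at `n - (i + 1) / 2` if `i` is odd. Inverting the relabelling, a pair
`i < j` of positions of `σ` is an inversion of `σ^∨` iff either it keeps its order in `σ^∨` and
`σᵢ > σⱼ`, or it is swapped and `σᵢ < σⱼ`. It is swapped exactly when `i` is odd in 0-based
indexing, i.e. even in the paper's 1-based one, which is the defining condition of `î`.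
-/

theorem invf_comp_eq {n : ℕ} {ψ φ : ℕ → ℕ} (f : ℕ → ℕ) (hψ : ∀ k < n, ψ k < n)
    (hφ : ∀ i < n, φ i < n) (hψφ : ∀ i < n, ψ (φ i) = i)
    (hφψ : ∀ k < n, φ (ψ k) = k) :
    invf n (f ∘ ψ) = ((range n ×ˢ range n).filter (fun p => p.1 < p.2 ∧
      ((φ p.1 < φ p.2 ∧ f p.2 < f p.1) ∨ (φ p.2 < φ p.1 ∧ f p.1 < f p.2)))).card := by
  unfold invf
  refine card_nbij' (fun q => (min (ψ q.1) (ψ q.2), max (ψ q.1) (ψ q.2)))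
    (fun p => (min (φ p.1) (φ p.2), max (φ p.1) (φ p.2))) ?_ ?_ ?_ ?_
  · rintro ⟨k, l⟩ hq
    simp only [coe_filter, mem_product, mem_range, Set.mem_ofPred_eq, Function.comp_apply] at hq ⊢
    obtain ⟨⟨hk, hl⟩, hkl, hf⟩ := hq
    have hne : ψ k ≠ ψ l := fun h => hkl.ne (by rw [← hφψ k hk, h, hφψ l hl])
    rcases lt_or_gt_of_ne hne with h | h
    · simp only [min_eq_left h.le, max_eq_right h.le, hφψ k hk, hφψ l hl]
      exact ⟨⟨hψ k hk, hψ l hl⟩, h, Or.inl ⟨hkl, hf⟩⟩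
    · simp only [min_eq_right h.le, max_eq_left h.le, hφψ k hk, hφψ l hl]
      exact ⟨⟨hψ l hl, hψ k hk⟩, h, Or.inr ⟨hkl, hf⟩⟩
  · rintro ⟨i, j⟩ hp
    simp only [coe_filter, mem_product, mem_range, Set.mem_ofPred_eq, Function.comp_apply] at hp ⊢
    obtain ⟨⟨hi, hj⟩, hij, ⟨h, hf⟩ | ⟨h, hf⟩⟩ := hp
    · simp only [min_eq_left h.le, max_eq_right h.le, hψφ i hi, hψφ j hj]
      exact ⟨⟨hφ i hi, hφ j hj⟩, h, hf⟩
    · simp only [min_eq_right h.le, max_eq_left h.le, hψφ i hi, hψφ j hj]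
      exact ⟨⟨hφ j hj, hφ i hi⟩, h, hf⟩
  · rintro ⟨k, l⟩ hq
    simp only [coe_filter, mem_product, mem_range, Set.mem_ofPred_eq] at hq
    obtain ⟨⟨hk, hl⟩, hkl, -⟩ := hq
    rcases le_total (ψ k) (ψ l) with h | h <;>
      simp [h, hφψ k hk, hφψ l hl, hkl.le]
  · rintro ⟨i, j⟩ hp
    simp only [coe_filter, mem_product, mem_range, Set.mem_ofPred_eq] at hp
    obtain ⟨⟨hi, hj⟩, hij, -⟩ := hp
    rcases le_total (φ i) (φ j) with h | h <;>
      simp [h, hψφ i hi, hψφ j hj, hij.le]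

-- `σ^∨ k = σ (veePos n k)`, and `veeIdx n` is the inverse relabelling on `range n`.
def veePos (n k : ℕ) : ℕ := if 2 * k < n then 2 * k else 2 * (n - k) - 1

def veeIdx (n i : ℕ) : ℕ := if i % 2 = 0 then i / 2 else n - (i + 1) / 2

theorem vee_eq_comp {n : ℕ} (σ : Equiv.Perm (Fin n)) : vee σ = ent σ ∘ veePos n := by
  funext k
  exact (apply_ite (ent σ) _ _ _).symm

theorem veePos_lt {n k : ℕ} (hk : k < n) : veePos n k < n := by
  unfold veePos; split <;> omega

theorem veeIdx_lt {n i : ℕ} (hi : i < n) : veeIdx n i < n := by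
  unfold veeIdx; split <;> omega

theorem veePos_veeIdx {n i : ℕ} (hi : i < n) : veePos n (veeIdx n i) = i := by
  unfold veePos veeIdx; split <;> split <;> omega

theorem veeIdx_veePos {n k : ℕ} (hk : k < n) : veeIdx n (veePos n k) = k := by
  unfold veePos veeIdx; split <;> split <;> omega

theorem veeIdx_lt_veeIdx_iff {n i j : ℕ} (hj : j < n) (hij : i < j) :
    veeIdx n i < veeIdx n j ↔ Even i := by
  rw [Nat.even_iff]; unfold veeIdx; split <;> split <;> omega

theorem veeIdx_lt_veeIdx_iff_not_even {n i j : ℕ} (hj : j < n) (hij : i < j) :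
    veeIdx n j < veeIdx n i ↔ ¬ Even i := by
  rw [Nat.even_iff]; unfold veeIdx; split <;> split <;> omega

theorem stmt9 (n : ℕ) (σ : Equiv.Perm (Fin n)) :
    altInv σ = invf n (vee σ) := by
  rw [vee_eq_comp, invf_comp_eq _ (fun _ => veePos_lt) (fun _ => veeIdx_lt)
    (fun _ => veePos_veeIdx) (fun _ => veeIdx_veePos)]
  refine congrArg card (filter_congr fun p hp => and_congr_right fun hij => ?_)
  have hj : p.2 < n := mem_range.mp (mem_product.mp hp).2
  rw [veeIdx_lt_veeIdx_iff hj hij, veeIdx_lt_veeIdx_iff_not_even hj hij]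
end
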